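/- arXiv:1904.13101 — 7 statements merged into one kernel-verified Lean document; each statement's English description precedes it below -/
import Mathlib

section
/- In a binary causal model, if X⃗ = x⃗ is an actual cause of φ (according to the modified Halpern-Pearl definition), then every alternative setting x⃗′ of the cause variables witnessing condition AC2 satisfies x′ᵢ = ¬xᵢ for every index i; i.e., in Boolean models the counterfactual setting must flip every cause variable. -/
/-- A Boolean causal model: each endogenous variable `v : V` has a structural
equation `F v` computing its value from the exogenous assignment and the
values of the other endogenous variables. -/
structure CausalModel (U V : Type) where
  F : V → (U → Bool) → (V → Bool) → Bool

/-- `a` is a solution of the model `M` under context `u` and intervention `I`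
(`I v = some b` means `v` has been set to the constant `b`). -/
def Solves {U V : Type} (M : CausalModel U V) (u : U → Bool) (I : V → Option Bool)
    (a : V → Bool) : Prop :=
  ∀ v, a v = (I v).getD (M.F v u a)

/-- The intervention `[X⃗ ← x⃗', W⃗ ← w⃗]`. -/
def ivn {V : Type} [DecidableEq V] (Xs : Finset V) (x' : V → Bool) (W : Finset V)
    (w : V → Bool) : V → Option Bool :=
  fun v => if v ∈ Xs then some (x' v) else if v ∈ W then some (w v) else none

/-- AC1: the cause and the effect hold in the actual evaluation `act`. -/
def AC1 {U V : Type} (_M : CausalModel U V) (_u : U → Bool) (act : V → Bool)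
    (Xs : Finset V) (x : V → Bool) (φ : (V → Bool) → Prop) : Prop :=
  (∀ v ∈ Xs, act v = x v) ∧ φ act

/-- AC2: some contingency `W⃗` (fixed at its actual values) and some setting `x⃗'`
of the cause variables make `¬φ` hold. -/
def AC2 {U V : Type} [DecidableEq V] (M : CausalModel U V) (u : U → Bool) (act : V → Bool)
    (Xs : Finset V) (φ : (V → Bool) → Prop) : Prop :=
  ∃ (W : Finset V) (x' a : V → Bool), Solves M u (ivn Xs x' W act) a ∧ ¬ φ a

/-- AC3: minimality — no strict subset of the cause satisfies AC1 and AC2. -/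
def AC3 {U V : Type} [DecidableEq V] (M : CausalModel U V) (u : U → Bool) (act : V → Bool)
    (Xs : Finset V) (x : V → Bool) (φ : (V → Bool) → Prop) : Prop :=
  ∀ Xs' : Finset V, Xs' ⊂ Xs → ¬ (AC1 M u act Xs' x φ ∧ AC2 M u act Xs' φ)

/-- Modified Halpern–Pearl actual cause. -/
def IsCause {U V : Type} [DecidableEq V] (M : CausalModel U V) (u : U → Bool) (act : V → Bool)
    (Xs : Finset V) (x : V → Bool) (φ : (V → Bool) → Prop) : Prop :=
  AC1 M u act Xs x φ ∧ AC2 M u act Xs φ ∧ AC3 M u act Xs x φ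

/-! In a Boolean model, a setting `x⃗'` that does not flip some cause variable `v`
keeps it at its actual value; moving `v` from the cause into the contingency then
gives an AC2 witness for the smaller cause, contradicting AC3. -/

theorem ivn_erase_insert {V : Type} [DecidableEq V] {Xs W : Finset V} {x' w : V → Bool}
    {v : V} (hv : v ∈ Xs) (hx' : x' v = w v) :
    ivn (Xs.erase v) x' (insert v W) w = ivn Xs x' W w := by
  funext y
  by_cases hyv : y = v
  · subst hyv
    simp [ivn, hv, hx']
  · simp [ivn, hyv]

theorem AC2.erase_of_eq {U V : Type} [DecidableEq V] {M : CausalModel U V} {u : U → Bool}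
    {act : V → Bool} {Xs W : Finset V} {φ : (V → Bool) → Prop} {x' a : V → Bool}
    (hsol : Solves M u (ivn Xs x' W act) a) (hnφ : ¬ φ a) {v : V} (hv : v ∈ Xs)
    (hx' : x' v = act v) :
    AC2 M u act (Xs.erase v) φ :=
  ⟨insert v W, x', a, by rwa [ivn_erase_insert hv hx'], hnφ⟩

theorem AC1.mono {U V : Type} {M : CausalModel U V} {u : U → Bool} {act : V → Bool}
    {Xs Xs' : Finset V} {x : V → Bool} {φ : (V → Bool) → Prop}
    (h : AC1 M u act Xs x φ) (hsub : Xs' ⊆ Xs) : AC1 M u act Xs' x φ :=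
  ⟨fun v hv => h.1 v (hsub hv), h.2⟩

theorem stmt0_general {U V : Type} [DecidableEq V] (M : CausalModel U V) (u : U → Bool)
    (act : V → Bool)
    (Xs : Finset V) (x : V → Bool) (φ : (V → Bool) → Prop)
    (hcause : IsCause M u act Xs x φ) :
    ∀ (W : Finset V) (x' a : V → Bool),
      Solves M u (ivn Xs x' W act) a → ¬ φ a → ∀ v ∈ Xs, x' v = ! x v := by
  intro W x' a hsol hnφ v hv
  obtain ⟨hAC1, -, hAC3⟩ := hcause
  refine Bool.eq_not_of_ne fun hx' => hAC3 (Xs.erase v) (Finset.erase_ssubset hv) ⟨?_, ?_⟩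
  · exact hAC1.mono (Finset.erase_subset v Xs)
  · exact AC2.erase_of_eq hsol hnφ hv (hx'.trans (hAC1.1 v hv).symm)

/-- Lemma 1 (negation lemma): in a binary model, if `X⃗ = x⃗` is an actual cause
of `φ`, then every setting `x⃗'` witnessing AC2 flips every cause variable. -/
theorem stmt0 {U V : Type} [DecidableEq V] (M : CausalModel U V) (u : U → Bool)
    (act : V → Bool) (hact : Solves M u (fun _ => none) act)
    (huniq : ∀ I : V → Option Bool, ∃! a, Solves M u I a)
    (Xs : Finset V) (x : V → Bool) (φ : (V → Bool) → Prop)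
    (hcause : IsCause M u act Xs x φ) :
    ∀ (W : Finset V) (x' a : V → Bool),
      Solves M u (ivn Xs x' W act) a → ¬ φ a → ∀ v ∈ Xs, x' v = ! x v :=
  stmt0_general M u act Xs x φ hcause
end

section
/- In an acyclic Boolean causal model under context u⃗, intervening on a set of variables W⃗ by fixing them to their values w⃗ in the unique actual solution yields a model whose unique solution equals the original actual solution; consequently (M,u⃗) ⊨ φ iff (M,u⃗) ⊨ [W⃗ ← w⃗]φ for every Boolean combination φ of primitive events. -/
theorem Solves.of_agrees {U V : Type} {M : CausalModel U V} {u : U → Bool}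
    {I : V → Option Bool} {a : V → Bool} (ha : Solves M u (fun _ => none) a)
    (hI : ∀ v b, I v = some b → a v = b) : Solves M u I a := by
  intro v
  cases h : I v with
  | none => exact ha v
  | some b => exact hI v b h

/-- Intervening by fixing `W⃗` at its actual values does not change the unique
solution; hence `(M,u⃗) ⊨ φ` iff `(M,u⃗) ⊨ [W⃗ ← w⃗]φ`. -/
theorem stmt4 {U V : Type} [DecidableEq V] (M : CausalModel U V) (u : U → Bool)
    (act : V → Bool) (hact : Solves M u (fun _ => none) act)
    (huniq : ∀ I : V → Option Bool, ∃! a, Solves M u I a)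
    (W : Finset V) :
    Solves M u (fun v => if v ∈ W then some (act v) else none) act ∧
    (∀ a, Solves M u (fun v => if v ∈ W then some (act v) else none) a → a = act) ∧
    (∀ φ : (V → Bool) → Prop,
      φ act ↔ ∀ a, Solves M u (fun v => if v ∈ W then some (act v) else none) a → φ a) := by
  set I : V → Option Bool := fun v => if v ∈ W then some (act v) else none
  have hsol : Solves M u I act := hact.of_agrees fun v b => by
    simp only [I]
    split_ifs <;> simp
  have hunique : ∀ a, Solves M u I a → a = act := fun a ha => (huniq I).unique ha hsol
  exact ⟨hsol, hunique, fun φ => ⟨fun h a ha => hunique a ha ▸ h, fun h => h act hsol⟩⟩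
end

section
/- Soundness of the SAT encoding for AC2: Let F := ¬φ ∧ (literals fixing each exogenous variable Uᵢ to uᵢ) ∧ ⋀_{Vᵢ ∉ X⃗} ((Vᵢ ↔ F_{Vᵢ}) ∨ ℓ(Vᵢ = vᵢ)) ∧ ⋀ᵢ ℓ(Xᵢ = ¬xᵢ), where ℓ(Y = y) is the literal Y if y = 1 and ¬Y if y = 0, and v⃗ is the actual evaluation of (M,u⃗). If F is satisfiable by an assignment v⃗′, then taking W⃗ to be the set of endogenous variables Vⱼ with v′ⱼ = vⱼ, condition AC2 holds: (M,u⃗) ⊨ [X⃗ ← ¬x⃗, W⃗ ← w⃗]¬φ, where w⃗ is the restriction of v⃗ to W⃗. -/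
/-- Satisfaction of the SAT-encoding formula `F` for AC2: `¬φ` holds, every
endogenous variable outside the candidate cause either follows its equation or
keeps its actual value, and every cause variable is flipped. (The exogenous
literals are encoded by evaluating the equations at the fixed context `u`.) -/
def FSat {U V : Type} (M : CausalModel U V) (u : U → Bool) (act : V → Bool)
    (Xs : Finset V) (x : V → Bool) (φ : (V → Bool) → Prop) (a : V → Bool) : Prop :=
  ¬ φ a ∧ (∀ v, v ∉ Xs → (a v = M.F v u a ∨ a v = act v)) ∧ (∀ v ∈ Xs, a v = ! x v)

/-- Satisfaction of the SAT-encoding formula `G` for AC3: as `F`, but the cause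
variables are only constrained by the tautological disjunction `Xᵢ ∨ ¬Xᵢ`. -/
def GSat {U V : Type} (M : CausalModel U V) (u : U → Bool) (act : V → Bool)
    (Xs : Finset V) (_x : V → Bool) (φ : (V → Bool) → Prop) (a : V → Bool) : Prop :=
  ¬ φ a ∧ (∀ v, v ∉ Xs → (a v = M.F v u a ∨ a v = act v)) ∧
    (∀ v ∈ Xs, a v = true ∨ a v = false)

/-! A satisfying assignment `v'` of `F` is itself a solution of the intervened model: cause
variables carry their flipped values, the variables of `W⃗` carry their actual values, and every
other variable differs from its actual value, so the disjunction in `F` forces it to follow its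
equation. Since solutions are unique, every solution of the intervened model is `v'`, which
satisfies `¬φ`. -/

theorem FSat.solves_ivn {U V : Type} [Fintype V] [DecidableEq V] {M : CausalModel U V}
    {u : U → Bool} {act : V → Bool} {Xs : Finset V} {x : V → Bool} {φ : (V → Bool) → Prop}
    {v' : V → Bool} (hF : FSat M u act Xs x φ v') :
    Solves M u
      (ivn Xs (fun v => ! x v) (Finset.univ.filter fun v => v ∉ Xs ∧ v' v = act v) act) v' := by
  obtain ⟨-, hout, hin⟩ := hF
  intro v
  by_cases hx : v ∈ Xs
  · simp [ivn, hx, hin v hx]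
  by_cases hw : v' v = act v
  · simp [ivn, hx, hw]
  have hfollows : v' v = M.F v u v' := (hout v hx).resolve_right hw
  simpa [ivn, hx, hw] using hfollows

theorem stmt5_general {U V : Type} [Fintype V] [DecidableEq V] (M : CausalModel U V)
    (u : U → Bool) (act : V → Bool)
    (huniq : ∀ I : V → Option Bool, ∃! a, Solves M u I a)
    (Xs : Finset V) (x : V → Bool) (φ : (V → Bool) → Prop)
    (v' : V → Bool) (hF : FSat M u act Xs x φ v') :
    Solves M u
      (ivn Xs (fun v => ! x v)
        (Finset.univ.filter fun v => v ∉ Xs ∧ v' v = act v) act) v' ∧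
    (∀ a, Solves M u
        (ivn Xs (fun v => ! x v)
          (Finset.univ.filter fun v => v ∉ Xs ∧ v' v = act v) act) a → ¬ φ a) := by
  have hsol := hF.solves_ivn
  refine ⟨hsol, fun a ha => ?_⟩
  rw [(huniq _).unique ha hsol]
  exact hF.1

/-- Soundness of the SAT encoding for AC2: a satisfying assignment `v'` of `F`
yields, with `W⃗ := {Vⱼ ∉ X⃗ | v'ⱼ = vⱼ}`, the counterfactual
`(M,u⃗) ⊨ [X⃗ ← ¬x⃗, W⃗ ← w⃗]¬φ`. -/
theorem stmt5 {U V : Type} [Fintype V] [DecidableEq V] (M : CausalModel U V)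
    (u : U → Bool) (act : V → Bool) (hact : Solves M u (fun _ => none) act)
    (huniq : ∀ I : V → Option Bool, ∃! a, Solves M u I a)
    (Xs : Finset V) (x : V → Bool) (φ : (V → Bool) → Prop)
    (v' : V → Bool) (hF : FSat M u act Xs x φ v') :
    Solves M u
      (ivn Xs (fun v => ! x v)
        (Finset.univ.filter fun v => v ∉ Xs ∧ v' v = act v) act) v' ∧
    (∀ a, Solves M u
        (ivn Xs (fun v => ! x v)
          (Finset.univ.filter fun v => v ∉ Xs ∧ v' v = act v) act) a → ¬ φ a) :=
  stmt5_general M u act huniq Xs x φ v' hF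
end

section
/- Completeness of the SAT encoding for AC2 with flipped cause: if there exists a set W⃗ of endogenous variables such that (M,u⃗) ⊨ [X⃗ ← ¬x⃗, W⃗ ← w⃗]¬φ (with w⃗ the actual values of W⃗), then the formula F := ¬φ ∧ (exogenous literals for u⃗) ∧ ⋀_{Vᵢ ∉ X⃗} ((Vᵢ ↔ F_{Vᵢ}) ∨ ℓ(Vᵢ = vᵢ)) ∧ ⋀ᵢ ℓ(Xᵢ = ¬xᵢ) is satisfiable; a satisfying assignment is given by the unique solution of the intervened model M_{X⃗←¬x⃗, W⃗←w⃗} under u⃗. -/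
namespace Solves

variable {U V : Type} [DecidableEq V] {M : CausalModel U V} {u : U → Bool}
  {Xs W : Finset V} {x' w a : V → Bool}

theorem ivn_of_mem (h : Solves M u (ivn Xs x' W w) a) {v : V} (hv : v ∈ Xs) : a v = x' v := by
  simpa [ivn, hv] using h v

theorem ivn_of_notMem (h : Solves M u (ivn Xs x' W w) a) {v : V} (hv : v ∉ Xs) :
    a v = M.F v u a ∨ a v = w v := by
  by_cases hw : v ∈ W
  · exact Or.inr (by simpa [ivn, hv, hw] using h v)
  · exact Or.inl (by simpa [ivn, hv, hw] using h v)

end Solves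

theorem fSat_of_solves_ivn {U V : Type} [DecidableEq V] {M : CausalModel U V} {u : U → Bool}
    {act : V → Bool} {Xs W : Finset V} {x : V → Bool} {φ : (V → Bool) → Prop} {a : V → Bool}
    (hsol : Solves M u (ivn Xs (fun v => ! x v) W act) a) (hnφ : ¬ φ a) :
    FSat M u act Xs x φ a :=
  ⟨hnφ, fun _ hv => hsol.ivn_of_notMem hv, fun _ hv => hsol.ivn_of_mem hv⟩

theorem stmt6_general {U V : Type} [DecidableEq V] (M : CausalModel U V) (u : U → Bool)
    (act : V → Bool)
    (Xs : Finset V) (x : V → Bool) (φ : (V → Bool) → Prop)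
    (W : Finset V) (a : V → Bool)
    (hsol : Solves M u (ivn Xs (fun v => ! x v) W act) a) (hnφ : ¬ φ a) :
    FSat M u act Xs x φ a ∧ ∃ v', FSat M u act Xs x φ v' :=
  have hF := fSat_of_solves_ivn hsol hnφ
  ⟨hF, a, hF⟩

/-- Completeness of the SAT encoding for AC2 with flipped cause: the unique
solution of the intervened model `M_{X⃗←¬x⃗, W⃗←w⃗}` (with `w⃗` the actual
values) satisfying `¬φ` is a satisfying assignment of `F`. -/
theorem stmt6 {U V : Type} [DecidableEq V] (M : CausalModel U V) (u : U → Bool)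
    (act : V → Bool) (hact : Solves M u (fun _ => none) act)
    (huniq : ∀ I : V → Option Bool, ∃! a, Solves M u I a)
    (Xs : Finset V) (x : V → Bool) (φ : (V → Bool) → Prop)
    (W : Finset V) (a : V → Bool)
    (hsol : Solves M u (ivn Xs (fun v => ! x v) W act) a) (hnφ : ¬ φ a) :
    FSat M u act Xs x φ a ∧ ∃ v', FSat M u act Xs x φ v' :=
  stmt6_general M u act Xs x φ W a hsol hnφ
end

section
/- In a binary tree causal model of height h where each internal node's value is the disjunction of its two children and leaves are set by exogenous variables all equal to 1, the conjunction of any two sibling leaves n₁ = 1 ∧ n₂ = 1 does not satisfy AC2 for the effect root = 1: for every contingency W⃗ fixed at actual values, flipping both leaves to 0 still leaves the root equal to 1 (provided h ≥ 2, so some other leaf feeds the root). -/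
/-- The binary tree causal model of height `h`: nodes are heap-indexed
`1, …, 2^(h+1) - 1` (index 0 is a dummy), node `i` with `i < 2^h` is internal
with value the disjunction of its children `2i` and `2i+1`, and nodes
`i ≥ 2^h` are leaves set by their exogenous variables. -/
def BTM (h : ℕ) : CausalModel (Fin (2 ^ (h + 1))) (Fin (2 ^ (h + 1))) where
  F i u a :=
    if _h0 : i.val = 0 then true
    else if hle : 2 ^ h ≤ i.val then u i
    else
      a ⟨2 * i.val, by
        have h2 : 2 ^ (h + 1) = 2 ^ h * 2 := pow_succ 2 h
        have h3 := i.isLt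
        omega⟩ ||
      a ⟨2 * i.val + 1, by
        have h2 : 2 ^ (h + 1) = 2 ^ h * 2 := pow_succ 2 h
        have h3 := i.isLt
        omega⟩


theorem Solves.eq_true_of_ne_some_false {U V : Type} {M : CausalModel U V} {u : U → Bool}
    {I : V → Option Bool} {a : V → Bool} (ha : Solves M u I a) {v : V}
    (hI : I v ≠ some false) (hF : M.F v u a = true) : a v = true := by
  rw [ha v]
  cases hv : I v with
  | none => exact hF
  | some b => cases b <;> simp_all

theorem ivn_ne_some_false {V : Type} [DecidableEq V] {Xs : Finset V} {x' : V → Bool}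
    {W : Finset V} {w : V → Bool} {v : V} (hv : v ∉ Xs) (hw : w v = true) :
    ivn Xs x' W w v ≠ some false := by
  unfold ivn
  split_ifs <;> simp [hw]

namespace BTM

variable {h : ℕ}

theorem F_eq_true {i : Fin (2 ^ (h + 1))} {a : Fin (2 ^ (h + 1)) → Bool}
    (hi : i.val = 0 ∨ 2 ^ h ≤ i.val ∨
      ∃ j, a j = true ∧ (j.val = 2 * i.val ∨ j.val = 2 * i.val + 1)) :
    (BTM h).F i (fun _ => true) a = true := by
  simp only [BTM]
  split_ifs with h0 hle
  · rfl
  · rfl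
  · obtain ⟨j, hj, hj' | hj'⟩ := hi.resolve_left h0 |>.resolve_left hle
    · rw [show j = ⟨2 * i.val, hj' ▸ j.isLt⟩ from Fin.ext hj'] at hj
      simp [hj]
    · rw [show j = ⟨2 * i.val + 1, hj' ▸ j.isLt⟩ from Fin.ext hj'] at hj
      simp [hj]

theorem eq_true_of_closed {I : Fin (2 ^ (h + 1)) → Option Bool} {a : Fin (2 ^ (h + 1)) → Bool}
    (ha : Solves (BTM h) (fun _ => true) I a) (P : Fin (2 ^ (h + 1)) → Prop)
    (hP : ∀ i, P i → I i ≠ some false ∧ (i.val = 0 ∨ 2 ^ h ≤ i.val ∨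
      ∃ j, P j ∧ (j.val = 2 * i.val ∨ j.val = 2 * i.val + 1))) :
    ∀ i, P i → a i = true := by
  intro i hi
  induction hn : 2 ^ (h + 1) - i.val using Nat.strong_induction_on generalizing i with
  | _ n ih =>
    obtain ⟨hIi, hi'⟩ := hP i hi
    refine ha.eq_true_of_ne_some_false hIi (F_eq_true ?_)
    by_cases h0 : i.val = 0
    · exact .inl h0
    rcases hi' with hroot | hleaf | ⟨j, hj, hchild⟩
    · exact .inl hroot
    · exact .inr (.inl hleaf)
    · exact .inr (.inr ⟨j, ih _ (by omega) j hj rfl, hchild⟩)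

end BTM

/-- In the binary tree model of height `h ≥ 2` with all exogenous variables 1,
flipping two sibling leaves `2k` and `2k+1` to 0 under any contingency `W⃗`
fixed at actual values (all 1) still leaves the root equal to 1. -/
theorem stmt15 (h k : ℕ) (hh : 2 ≤ h)
    (hk1 : 2 ^ h ≤ 2 * k) (hk2 : 2 * k + 1 < 2 ^ (h + 1)) :
    ∀ (W : Finset (Fin (2 ^ (h + 1)))) (a : Fin (2 ^ (h + 1)) → Bool),
      Solves (BTM h) (fun _ => true)
        (ivn ({⟨2 * k, by omega⟩, ⟨2 * k + 1, hk2⟩} : Finset (Fin (2 ^ (h + 1))))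
          (fun _ => false) W (fun _ => true)) a →
      a ⟨1, by
        have h2 : 2 ^ (h + 1) = 2 ^ h * 2 := pow_succ 2 h
        have h3 : 0 < 2 ^ h := by positivity
        omega⟩ = true := by
  intro W a ha
  have hk : 2 ≤ k := by
    have : 2 ^ 2 ≤ 2 ^ h := Nat.pow_le_pow_right (by norm_num) hh
    omega
  refine BTM.eq_true_of_closed ha (fun i => i.val ≠ k ∧ i.val ≠ 2 * k ∧ i.val ≠ 2 * k + 1)
    (fun i ⟨hik, hi2k, hi2k1⟩ => ⟨ivn_ne_some_false ?_ rfl, ?_⟩) _ (by simp only; omega)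
  · simp only [Finset.mem_insert, Finset.mem_singleton, Fin.ext_iff]
    omega
  · by_cases hleaf : 2 ^ h ≤ i.val
    · exact .inr (.inl hleaf)
    by_cases h0 : i.val = 0
    · exact .inl h0
    have : 2 ^ (h + 1) = 2 ^ h * 2 := pow_succ 2 h
    by_cases hleft : 2 * i.val = k
    · exact .inr (.inr ⟨⟨2 * i.val + 1, by omega⟩, by simp only; omega, .inr rfl⟩)
    · exact .inr (.inr ⟨⟨2 * i.val, by omega⟩, by simp only; omega, .inl rfl⟩)
end

section
/- Subset-cause criterion in Algorithm 2: let v⃗′ be a satisfying assignment of G, and let S be the set of indices j of cause variables Xⱼ such that v′ differs from the actual value xⱼ at Xⱼ and Xⱼ's equation does not evaluate to v′'s value of Xⱼ under v⃗′. If |S| < ℓ (the size of the cause), then the restricted vector (Xⱼ = xⱼ)_{j∈S} is a strict sub-vector of X⃗ = x⃗ for which AC2 holds (witnessed by the contingency of all variables keeping their actual values in v⃗′), and hence AC3 fails for X⃗ = x⃗ provided AC1 holds for the sub-vector. -/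
theorem solves_ivn_self {U V : Type} [Fintype V] [DecidableEq V] (M : CausalModel U V)
    (u : U → Bool) (act : V → Bool) (S : Finset V) (a : V → Bool)
    (hfollow : ∀ v ∉ S, a v ≠ act v → a v = M.F v u a) :
    Solves M u (ivn S a (Finset.univ.filter fun v => a v = act v) act) a := by
  intro v
  by_cases hvS : v ∈ S
  · simp [ivn, hvS]
  · by_cases hv : a v = act v
    · simp [ivn, hvS, hv]
    · simpa [ivn, hvS, hv] using hfollow v hvS hv

theorem ac2_of_changed_vars_follow_equations {U V : Type} [Fintype V] [DecidableEq V]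
    (M : CausalModel U V) (u : U → Bool) (act : V → Bool) (S : Finset V)
    (φ : (V → Bool) → Prop) (a : V → Bool) (hφ : ¬ φ a)
    (hfollow : ∀ v ∉ S, a v ≠ act v → a v = M.F v u a) :
    AC2 M u act S φ :=
  ⟨_, a, a, solves_ivn_self M u act S a hfollow, hφ⟩

theorem GSat.eq_F_of_notMem_filter_of_ne {U V : Type} {M : CausalModel U V} {u : U → Bool}
    {act : V → Bool} {Xs : Finset V} {x : V → Bool} {φ : (V → Bool) → Prop} {v' : V → Bool}
    (hG : GSat M u act Xs x φ v') (hx : ∀ v ∈ Xs, act v = x v) {v : V}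
    (hvS : v ∉ Xs.filter fun v => v' v ≠ x v ∧ v' v ≠ M.F v u v') (hv : v' v ≠ act v) :
    v' v = M.F v u v' := by
  by_cases hvX : v ∈ Xs
  · have hxv : v' v ≠ x v := hx v hvX ▸ hv
    by_contra hF
    exact hvS (Finset.mem_filter.mpr ⟨hvX, hxv, hF⟩)
  · exact (hG.2.1 v hvX).resolve_right hv

theorem stmt17_general {U V : Type} [Fintype V] [DecidableEq V] (M : CausalModel U V)
    (u : U → Bool) (act : V → Bool)
    (Xs : Finset V) (x : V → Bool) (φ : (V → Bool) → Prop)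
    (hAC1 : AC1 M u act Xs x φ)
    (v' : V → Bool) (hG : GSat M u act Xs x φ v')
    (hS : (Xs.filter fun v => v' v ≠ x v ∧ v' v ≠ M.F v u v').card < Xs.card)
    (hAC1S : AC1 M u act (Xs.filter fun v => v' v ≠ x v ∧ v' v ≠ M.F v u v') x φ) :
    AC2 M u act (Xs.filter fun v => v' v ≠ x v ∧ v' v ≠ M.F v u v') φ ∧
    ¬ AC3 M u act Xs x φ := by
  set S := Xs.filter fun v => v' v ≠ x v ∧ v' v ≠ M.F v u v'
  have hAC2 : AC2 M u act S φ :=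
    ac2_of_changed_vars_follow_equations M u act S φ v' hG.1
      fun _ hvS hv => hG.eq_F_of_notMem_filter_of_ne hAC1.1 hvS hv
  have hsub : S ⊂ Xs :=
    (Finset.filter_subset _ Xs).ssubset_of_ne fun h => hS.ne (congrArg Finset.card h)
  exact ⟨hAC2, fun hAC3 => hAC3 S hsub ⟨hAC1S, hAC2⟩⟩

/-- Algorithm 2's subset-cause criterion: if `v'` satisfies `G` and the set
`S` of cause variables whose value in `v'` differs from the actual cause value
and whose equation does not evaluate to their `v'`-value is a strict subset of
the cause (fewer than `ℓ` elements), then AC2 holds for the sub-cause `S`,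
and (given AC1 for the sub-cause) AC3 fails for `X⃗ = x⃗`. -/
theorem stmt17 {U V : Type} [Fintype V] [DecidableEq V] (M : CausalModel U V)
    (u : U → Bool) (act : V → Bool) (hact : Solves M u (fun _ => none) act)
    (huniq : ∀ I : V → Option Bool, ∃! a, Solves M u I a)
    (Xs : Finset V) (x : V → Bool) (φ : (V → Bool) → Prop)
    (hcard : 2 ≤ Xs.card) (hAC1 : AC1 M u act Xs x φ)
    (v' : V → Bool) (hG : GSat M u act Xs x φ v')
    (hS : (Xs.filter fun v => v' v ≠ x v ∧ v' v ≠ M.F v u v').card < Xs.card)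
    (hAC1S : AC1 M u act (Xs.filter fun v => v' v ≠ x v ∧ v' v ≠ M.F v u v') x φ) :
    AC2 M u act (Xs.filter fun v => v' v ≠ x v ∧ v' v ≠ M.F v u v') φ ∧
    ¬ AC3 M u act Xs x φ :=
  stmt17_general M u act Xs x φ hAC1 v' hG hS hAC1S
end

section
/- Validity of non-minimal W⃗: if AC2 holds with witness set W⃗ (fixed at actual values) and W⃗′ ⊇ W⃗ is any superset of endogenous variables disjoint from X⃗ such that every variable in W⃗′ takes its actual value in the unique solution of the intervened model M_{X⃗←x⃗′, W⃗←w⃗} under u⃗, then AC2 also holds with witness W⃗′. -/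
theorem Solves.of_eq_or_eq_some {U V : Type} {M : CausalModel U V} {u : U → Bool}
    {I J : V → Option Bool} {a : V → Bool} (h : Solves M u I a)
    (hJ : ∀ v, J v = I v ∨ J v = some (a v)) : Solves M u J a := by
  intro v
  rcases hJ v with hv | hv
  · rw [hv]
    exact h v
  · rw [hv]
    rfl

theorem ivn_eq_or_eq_some_of_subset {V : Type} [DecidableEq V] {Xs W W' : Finset V}
    {x' w a : V → Bool} (hWW' : W ⊆ W') (hvals : ∀ v ∈ W', a v = w v) (v : V) :
    ivn Xs x' W' w v = ivn Xs x' W w v ∨ ivn Xs x' W' w v = some (a v) := by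
  unfold ivn
  by_cases hx : v ∈ Xs
  · simp only [hx, if_true, true_or]
  by_cases hw' : v ∈ W'
  · simp only [hx, hw', if_true, if_false, hvals v hw', or_true]
  · simp only [hx, hw', if_false, mt (@hWW' v) hw', true_or]

theorem stmt19_general {U V : Type} [DecidableEq V] (M : CausalModel U V) (u : U → Bool)
    (act : V → Bool) (Xs : Finset V) (x' : V → Bool) (φ : (V → Bool) → Prop)
    (W W' : Finset V) (a : V → Bool)
    (hsol : Solves M u (ivn Xs x' W act) a) (hnφ : ¬ φ a) (hWW' : W ⊆ W')
    (hvals : ∀ v ∈ W', a v = act v) :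
    ∃ b, Solves M u (ivn Xs x' W' act) b ∧ ¬ φ b :=
  ⟨a, hsol.of_eq_or_eq_some (ivn_eq_or_eq_some_of_subset hWW' hvals), hnφ⟩

/-- Validity of non-minimal `W⃗`: if AC2 holds with witness `W⃗` via the
counterfactual solution `a`, and `W⃗' ⊇ W⃗` is disjoint from the cause and
all its variables take their actual values in `a`, then AC2 also holds with
witness `W⃗'`. -/
theorem stmt19 {U V : Type} [DecidableEq V] (M : CausalModel U V) (u : U → Bool)
    (act : V → Bool) (hact : Solves M u (fun _ => none) act)
    (huniq : ∀ I : V → Option Bool, ∃! a, Solves M u I a)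
    (Xs : Finset V) (x' : V → Bool) (φ : (V → Bool) → Prop)
    (W W' : Finset V) (a : V → Bool)
    (hsol : Solves M u (ivn Xs x' W act) a) (hnφ : ¬ φ a)
    (hWW' : W ⊆ W') (hdisj : Disjoint W' Xs)
    (hvals : ∀ v ∈ W', a v = act v) :
    ∃ b, Solves M u (ivn Xs x' W' act) b ∧ ¬ φ b :=
  stmt19_general M u act Xs x' φ W W' a hsol hnφ hWW' hvals
end
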